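/- arXiv:2509.10047 — 2 statements merged into one kernel-verified Lean document; each statement's English description precedes it below -/
import Mathlib

section
/- Saito's criterion (degree form): Let (A,m) be a multiarrangement in K^ℓ and let θ_1,...,θ_ℓ ∈ D(A,m) be homogeneous derivations with det(θ_i(x_j)) = c · Q(A,m) for some nonzero scalar c ∈ K. Then θ_1,...,θ_ℓ form an S-basis of D(A,m), i.e., D(A,m) = ⊕_{i=1}^ℓ S θ_i. -/
/-!
For any `η_1, …, η_ℓ ∈ D(A,m)` each `α_H^{m(H)}` divides `det (η_i(x_j))`: multiplying a
column `j` with `α_H(e_j) ≠ 0` by that scalar and adding the other columns with coefficients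
`α_H(e_k)` produces the column `(η_i(α_H))_i`, which `α_H^{m(H)}` divides. Distinct `α_H` are
non-associated irreducible linear forms, so these powers are pairwise coprime and `Q(A,m)`
divides the determinant. For the `θ_i` that determinant is `c · Q(A,m) ≠ 0`, which gives
independence, and by Cramer's rule the coefficients of any `η ∈ D(A,m)` are quotients of
determinants divisible by `Q(A,m)` by `c · Q(A,m)`, hence polynomials.
-/

open MvPolynomial Finset

noncomputable section

namespace STpaper

variable {K : Type*} [Field K] {ℓ : ℕ}

/-- The polynomial ring `S = K[x_1,…,x_ℓ]`. -/
abbrev S (K : Type*) [Field K] (ℓ : ℕ) := MvPolynomial (Fin ℓ) K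

/-- The linear form with coefficient vector `a`. -/
def lin (a : Fin ℓ → K) : S K ℓ := ∑ i, C (a i) * X i

/-- A (central) multiarrangement in `K^ℓ`: a finite family of pairwise
non-proportional nonzero linear forms together with positive multiplicities. -/
structure MultiArr (K : Type*) [Field K] (ℓ : ℕ) (ι : Type*) [Fintype ι] where
  α : ι → Fin ℓ → K
  nonzero : ∀ H, α H ≠ 0
  nonprop : ∀ H H', H ≠ H' → ∀ c : K, α H ≠ c • α H'
  m : ι → ℕ
  mpos : ∀ H, 0 < m H

variable {ι : Type*} [Fintype ι]

/-- `|m|`, the total multiplicity. -/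
def MultiArr.size (A : MultiArr K ℓ ι) : ℕ := ∑ H, A.m H

/-- The defining polynomial `Q(A,m) = ∏ α_H^{m(H)}`. -/
def MultiArr.Q (A : MultiArr K ℓ ι) : S K ℓ := ∏ H, lin (A.α H) ^ A.m H

/-- Essential: the linear forms span the dual space. -/
def MultiArr.Essential (A : MultiArr K ℓ ι) : Prop :=
  Submodule.span K (Set.range A.α) = ⊤

/-- Index type for the standard basis of `∧^p Der S`: `p`-element subsets of `Fin ℓ`. -/
abbrev Sub (ℓ p : ℕ) := {s : Finset (Fin ℓ) // s.card = p}

/-- `det (∂_{i_j} f_k)` for the increasing enumeration `i_1 < … < i_p` of `s`. -/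
def detM {p : ℕ} (s : Sub ℓ p) (f : Fin p → S K ℓ) : S K ℓ :=
  Matrix.det (Matrix.of fun j k : Fin p => pderiv (s.1.orderIsoOfFin s.2 j).1 (f k))

/-- Evaluation of a `p`-derivation (given by its coefficients `c`) on the
`p`-tuple of polynomials `f`, as a linear map in `c`. -/
def evalD (p : ℕ) (f : Fin p → S K ℓ) : ((Sub ℓ p) → S K ℓ) →ₗ[S K ℓ] S K ℓ where
  toFun c := ∑ s, c s * detM s f
  map_add' a b := by simp [add_mul, Finset.sum_add_distrib]
  map_smul' r a := by simp [smul_eq_mul, Finset.mul_sum, mul_assoc]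

/-- The logarithmic derivation module `D^p(A,m)`:
`θ ∈ ∧^p Der S` with `θ(α_H, f_2, …, f_p) ∈ S·α_H^{m(H)}` for all `H` and `f_i`. -/
def Dmod (A : MultiArr K ℓ ι) (p : ℕ) : Submodule (S K ℓ) ((Sub ℓ p) → S K ℓ) where
  carrier := {c | ∀ H : ι, ∀ f : Fin p → S K ℓ, ∀ j : Fin p, (j : ℕ) = 0 →
      f j = lin (A.α H) → lin (A.α H) ^ A.m H ∣ evalD p f c}
  add_mem' := fun {a b} ha hb H f j hj hf => by
    rw [map_add]; exact dvd_add (ha H f j hj hf) (hb H f j hj hf)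
  zero_mem' := fun H f j hj hf => by rw [map_zero]; exact dvd_zero _
  smul_mem' := fun r c hc H f j hj hf => by
    rw [map_smul, smul_eq_mul]; exact (hc H f j hj hf).mul_left r

/-- `f` is homogeneous of (integer) degree `e` (for `e < 0` this means `f = 0`). -/
def IsHomogZ (f : S K ℓ) (e : ℤ) : Prop :=
  if 0 ≤ e then f.IsHomogeneous e.toNat else f = 0

lemma IsHomogZ.zero (e : ℤ) : IsHomogZ (0 : S K ℓ) e := by
  unfold IsHomogZ; split <;> simp [MvPolynomial.isHomogeneous_zero]

lemma IsHomogZ.add {f g : S K ℓ} {e : ℤ} (hf : IsHomogZ f e) (hg : IsHomogZ g e) :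
    IsHomogZ (f + g) e := by
  unfold IsHomogZ at *
  by_cases h : 0 ≤ e
  · simp only [if_pos h] at *; exact hf.add hg
  · simp only [if_neg h] at *; simp [hf, hg]

lemma IsHomogZ.ksmul {f : S K ℓ} {e : ℤ} (r : K) (hf : IsHomogZ f e) :
    IsHomogZ (r • f) e := by
  unfold IsHomogZ at *
  by_cases h : 0 ≤ e
  · simp only [if_pos h] at *
    rw [MvPolynomial.smul_eq_C_mul]
    simpa using (MvPolynomial.isHomogeneous_C _ r).mul hf
  · simp only [if_neg h] at *; simp [hf]

/-- A vector `v : κ → S` is homogeneous of degree `e` with respect to the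
degree shifts `sh` (with `deg ∂ = deg dx = 0`). -/
def HomogOfDeg {κ : Type*} (sh : κ → ℤ) (v : κ → S K ℓ) (e : ℤ) : Prop :=
  ∀ j, IsHomogZ (v j) (e - sh j)

/-- The degree-`e` homogeneous component of a graded submodule `M`,
as a `K`-subspace. -/
def MComp {κ : Type*} [Fintype κ] (M : Submodule (S K ℓ) (κ → S K ℓ))
    (sh : κ → ℤ) (e : ℤ) : Submodule K (κ → S K ℓ) where
  carrier := {v | v ∈ M ∧ HomogOfDeg sh v e}
  add_mem' := fun {a b} ha hb =>
    ⟨M.add_mem ha.1 hb.1, fun j => by simpa using (ha.2 j).add (hb.2 j)⟩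
  zero_mem' := ⟨M.zero_mem, fun j => by simpa using IsHomogZ.zero (e - sh j)⟩
  smul_mem' := fun r v hv =>
    ⟨by
      rw [show r • v = (C r : S K ℓ) • v from
        funext fun j => by simp [MvPolynomial.smul_eq_C_mul, smul_eq_mul]]
      exact M.smul_mem _ hv.1,
     fun j => by simpa using IsHomogZ.ksmul r (hv.2 j)⟩

/-- The Hilbert function of a graded submodule (shift `sh`). -/
def HilbFn {κ : Type*} [Fintype κ] (M : Submodule (S K ℓ) (κ → S K ℓ))
    (sh : κ → ℤ) (e : ℤ) : ℕ :=
  Module.finrank K (MComp M sh e)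

/-- The Hilbert series of a graded submodule (standard grading, shift `0`). -/
def hilb {κ : Type*} [Fintype κ] (M : Submodule (S K ℓ) (κ → S K ℓ)) :
    PowerSeries ℤ :=
  PowerSeries.mk fun n => (HilbFn M 0 (n : ℤ) : ℤ)

/-- `v ↦ ∑ v_j • g_j`, the map from a free module determined by generators `g`. -/
def combMap {κ : Type*} {n : ℕ} (g : Fin n → (κ → S K ℓ)) :
    (Fin n → S K ℓ) →ₗ[S K ℓ] (κ → S K ℓ) where
  toFun v := ∑ j, v j • g j
  map_add' a b := by simp [add_smul, Finset.sum_add_distrib]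
  map_smul' r a := by simp [Finset.smul_sum, mul_smul]

/-- The linear map given by the matrix `T`. -/
def matMap {n n' : ℕ} (T : Fin n → Fin n' → S K ℓ) :
    (Fin n' → S K ℓ) →ₗ[S K ℓ] (Fin n → S K ℓ) :=
  combMap (fun b a => T a b)

/-- A finite graded free resolution of a graded submodule `M ⊆ (κ → S)`
(with degree shift `sh` on the ambient free module):
`0 → F_len → ⋯ → F_0 → M → 0`, with `F_i` free with homogeneous generator
degrees `dg i`, homogeneous differentials, and exactness. -/
structure GFR {κ : Type*} [Fintype κ] (sh : κ → ℤ)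
    (M : Submodule (S K ℓ) (κ → S K ℓ)) where
  len : ℕ
  rk : ℕ → ℕ
  tail : ∀ i, len < i → rk i = 0
  dg : (i : ℕ) → Fin (rk i) → ℤ
  gen : Fin (rk 0) → (κ → S K ℓ)
  gen_mem : ∀ j, gen j ∈ M
  gen_hom : ∀ j, HomogOfDeg sh (gen j) (dg 0 j)
  mat : (i : ℕ) → Fin (rk i) → Fin (rk (i + 1)) → S K ℓ
  mat_hom : ∀ i a b, IsHomogZ (mat i a b) (dg (i + 1) b - dg i a)
  range_gen : LinearMap.range (combMap gen) = M
  exact0 : LinearMap.ker (combMap gen) = LinearMap.range (matMap (mat 0))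
  exact_succ : ∀ i, LinearMap.ker (matMap (mat i)) = LinearMap.range (matMap (mat (i + 1)))

/-- Castelnuovo–Mumford regularity bound: `reg M ≤ r` iff `M` admits a finite
graded free resolution with `i`-th generator degrees at most `r + i`. -/
def RegLE {κ : Type*} [Fintype κ] (M : Submodule (S K ℓ) (κ → S K ℓ))
    (sh : κ → ℤ) (r : ℤ) : Prop :=
  ∃ R : GFR sh M, ∀ i (j : Fin (R.rk i)), R.dg i j ≤ r + i

/-- Projective dimension bound: `pd_S M ≤ p`. -/
def PdLE {κ : Type*} [Fintype κ] (M : Submodule (S K ℓ) (κ → S K ℓ))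
    (sh : κ → ℤ) (p : ℕ) : Prop :=
  ∃ R : GFR sh M, R.len ≤ p

/-- The coefficient of `dx_{u}` in `ω ∧ dα` where `α` has coefficient vector `a`,
for a `p`-form with coefficients `ω` and a `(p+1)`-subset `u`; linear in `ω`. -/
def wedgeAt (p : ℕ) (a : Fin ℓ → K) (u : Sub ℓ (p + 1)) :
    ((Sub ℓ p) → S K ℓ) →ₗ[S K ℓ] S K ℓ where
  toFun ω := ∑ i : Fin ℓ, if h : i ∈ u.1 then
      ((-1 : S K ℓ)) ^ ((u.1.filter (· < i)).card) * C (a i) *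
        ω ⟨u.1.erase i, by simp [Finset.card_erase_of_mem h, u.2]⟩
    else 0
  map_add' x y := by
    classical
    simp only [Pi.add_apply]
    rw [← Finset.sum_add_distrib]
    refine Finset.sum_congr rfl fun i _ => ?_
    split_ifs with h
    · ring
    · simp
  map_smul' r x := by
    classical
    simp only [Pi.smul_apply, smul_eq_mul, RingHom.id_apply]
    rw [Finset.mul_sum]
    refine Finset.sum_congr rfl fun i _ => ?_
    split_ifs with h
    · ring
    · simp

/-- `Q(A,m)·Ω^p(A,m)`: the module of logarithmic differential `p`-forms,
cleared of denominators (an honest submodule of `Ω^p_V`).  The grading of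
`Ω^p(A,m)` itself is the grading of this module shifted down by `|m|`. -/
def OmegaQ (A : MultiArr K ℓ ι) (p : ℕ) : Submodule (S K ℓ) ((Sub ℓ p) → S K ℓ) where
  carrier := {ω | ∀ H : ι, ∀ u : Sub ℓ (p + 1),
      lin (A.α H) ^ A.m H ∣ wedgeAt p (A.α H) u ω}
  add_mem' := fun {a b} ha hb H u => by
    rw [map_add]; exact dvd_add (ha H u) (hb H u)
  zero_mem' := fun H u => by rw [map_zero]; exact dvd_zero _
  smul_mem' := fun r ω hω H u => by
    rw [map_smul, smul_eq_mul]; exact (hω H u).mul_left r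

section LinearForms

lemma coeff_single_lin (a : Fin ℓ → K) (j : Fin ℓ) :
    coeff (Finsupp.single j 1) (lin a) = a j := by
  classical
  simp [lin, coeff_sum, coeff_X, Finsupp.single_left_inj one_ne_zero]

lemma lin_injective : Function.Injective (lin : (Fin ℓ → K) → S K ℓ) :=
  fun a b h => funext fun j => by rw [← coeff_single_lin a j, h, coeff_single_lin]

lemma lin_smul (r : K) (a : Fin ℓ → K) : lin (r • a) = C r * lin a := by
  simp [lin, Finset.mul_sum, mul_assoc]

lemma lin_ne_zero {a : Fin ℓ → K} (ha : a ≠ 0) : lin a ≠ 0 := by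
  have : lin (0 : Fin ℓ → K) = 0 := by simp [lin]
  rw [← this]
  exact lin_injective.ne ha

lemma isHomogeneous_lin (a : Fin ℓ → K) : (lin a).IsHomogeneous 1 :=
  IsHomogeneous.sum _ _ _ fun i _ => by
    simpa using (isHomogeneous_C _ (a i)).mul (isHomogeneous_X K i)

lemma totalDegree_lin {a : Fin ℓ → K} (ha : a ≠ 0) : (lin a).totalDegree = 1 :=
  (isHomogeneous_lin a).totalDegree (lin_ne_zero ha)

lemma irreducible_lin {a : Fin ℓ → K} (ha : a ≠ 0) : Irreducible (lin a) := by
  refine irreducible_of_totalDegree_eq_one (totalDegree_lin ha) fun x hx => ?_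
  obtain ⟨j, hj⟩ := Function.ne_iff.mp ha
  have hxj := hx (Finsupp.single j 1)
  rw [coeff_single_lin] at hxj
  exact isUnit_iff_ne_zero.mpr fun hx0 => hj (zero_dvd_iff.mp (hx0 ▸ hxj))

lemma exists_eq_smul_of_lin_dvd_lin {a b : Fin ℓ → K} (ha : a ≠ 0) (hab : lin a ∣ lin b) :
    ∃ r : K, b = r • a := by
  obtain rfl | hb := eq_or_ne b 0
  · exact ⟨0, (zero_smul K a).symm⟩
  obtain ⟨q, hq⟩ := hab
  have hq0 : q ≠ 0 := by rintro rfl; exact lin_ne_zero hb (by simpa using hq)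
  have hdeg : q.totalDegree = 0 := by
    have := congrArg totalDegree hq
    rw [totalDegree_mul_of_isDomain (lin_ne_zero ha) hq0, totalDegree_lin ha,
      totalDegree_lin hb] at this
    omega
  rw [totalDegree_eq_zero_iff_eq_C.mp hdeg] at hq
  exact ⟨_, lin_injective (by rw [hq, lin_smul, mul_comm])⟩

lemma isRelPrime_lin {a b : Fin ℓ → K} (ha : a ≠ 0) (hab : ∀ r : K, b ≠ r • a) :
    IsRelPrime (lin a) (lin b) :=
  (irreducible_lin ha).isRelPrime_iff_not_dvd.mpr fun h =>
    (exists_eq_smul_of_lin_dvd_lin ha h).elim hab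

end LinearForms

lemma MultiArr.Q_ne_zero (A : MultiArr K ℓ ι) : A.Q ≠ 0 :=
  Finset.prod_ne_zero_iff.mpr fun H _ => pow_ne_zero _ (lin_ne_zero (A.nonzero H))

lemma MultiArr.pairwise_isRelPrime (A : MultiArr K ℓ ι) :
    Pairwise (Function.onFun IsRelPrime fun H => lin (A.α H) ^ A.m H) := fun H H' hne =>
  (isRelPrime_lin (A.nonzero H) (A.nonprop H' H hne.symm)).pow

def singletonEquiv (ℓ : ℕ) : Fin ℓ ≃ Sub ℓ 1 :=
  Equiv.ofBijective (fun j => ⟨{j}, Finset.card_singleton j⟩)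
    ⟨fun _ _ h => Finset.singleton_injective (congrArg Subtype.val h), fun s =>
      let ⟨j, hj⟩ := Finset.card_eq_one.mp s.2
      ⟨j, Subtype.ext hj.symm⟩⟩

lemma detM_singletonEquiv (j : Fin ℓ) (f : Fin 1 → S K ℓ) :
    detM (singletonEquiv ℓ j) f = pderiv j (f 0) := by
  simp only [detM, Matrix.det_fin_one, Matrix.of_apply, Finset.coe_orderIsoOfFin_apply]
  exact congrArg (pderiv · (f 0)) (Finset.orderEmbOfFin_singleton j 0)

lemma evalD_one_lin (a : Fin ℓ → K) (θ : Sub ℓ 1 → S K ℓ) :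
    evalD 1 (fun _ => lin a) θ = ∑ j, θ (singletonEquiv ℓ j) * C (a j) := by
  classical
  change ∑ s, θ s * detM s _ = _
  rw [← (singletonEquiv ℓ).sum_comp]
  simp [detM_singletonEquiv, lin, pderiv_X, Pi.single_apply]

lemma pow_dvd_of_mem_Dmod_one (A : MultiArr K ℓ ι) {θ : Sub ℓ 1 → S K ℓ}
    (hθ : θ ∈ Dmod A 1) (H : ι) :
    lin (A.α H) ^ A.m H ∣ ∑ j, θ (singletonEquiv ℓ j) * C (A.α H j) := by
  simpa only [evalD_one_lin] using hθ H (fun _ => lin (A.α H)) 0 rfl rfl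

section Matrix

variable {R : Type*} [CommRing R] {n κ : Type*} [Fintype n] [DecidableEq n]

open Matrix

lemma dvd_det_of_dvd_mulVec {p : R} (B : Matrix n n R) (w : n → R) {j : n}
    (hw : IsUnit (w j)) (hB : ∀ i, p ∣ (B *ᵥ w) i) : p ∣ B.det := by
  choose u hu using hB
  have h := Matrix.det_updateCol_sum B j w
  have hcol : (fun k => ∑ i, w i • B k i) = p • u := funext fun k => by
    simpa [Matrix.mulVec, dotProduct, mul_comm] using hu k
  rw [hcol, Matrix.det_updateCol_smul] at h
  exact hw.dvd_mul_left.mp ⟨_, by simpa using h.symm⟩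

variable [IsDomain R] (e : n ≃ κ) {N : Submodule R (κ → R)} {Q : R} {θ : n → κ → R}

lemma linearIndependent_of_det_ne_zero (hdet : (Matrix.of fun i j => θ i (e j)).det ≠ 0) :
    LinearIndependent R θ :=
  (Matrix.linearIndependent_rows_of_det_ne_zero hdet).of_comp (LinearMap.funLeft R R e)

lemma span_eq_of_dvd_det (hQ : Q ≠ 0)
    (hN : ∀ η : n → κ → R, (∀ i, η i ∈ N) → Q ∣ (Matrix.of fun i j => η i (e j)).det)
    (hθ : ∀ i, θ i ∈ N) {u : R} (hu : IsUnit u)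
    (hdet : (Matrix.of fun i j => θ i (e j)).det = u * Q) :
    Submodule.span R (Set.range θ) = N := by
  refine le_antisymm (Submodule.span_le.mpr (Set.range_subset_iff.mpr hθ)) fun v hv => ?_
  set M : Matrix n n R := Matrix.of fun i j => θ i (e j)
  have hcramer : ∀ i, Q ∣ Mᵀ.cramer (v ∘ e) i := fun i => by
    rw [Matrix.cramer_apply, Matrix.updateCol_transpose, Matrix.det_transpose]
    convert hN (Function.update θ i v) fun k => ?_ using 3
    · ext k j
      by_cases hk : k = i
      · subst hk; simp [M]
      · simp [M, hk]
    · by_cases hk : k = i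
      · subst hk; simpa using hv
      · simpa [hk] using hθ k
  choose q hq using hcramer
  have hMq : Mᵀ *ᵥ q = u • (v ∘ e) := by
    have h := Mᵀ.mulVec_cramer (v ∘ e)
    rw [show Mᵀ.cramer (v ∘ e) = Q • q from funext hq, Matrix.mulVec_smul,
      Matrix.det_transpose, hdet, mul_comm, mul_smul] at h
    exact smul_right_injective _ hQ h
  refine (Submodule.mem_span_range_iff_exists_fun R).mpr ⟨hu.unit⁻¹ • q, funext fun s => ?_⟩
  obtain ⟨j, rfl⟩ := e.surjective s
  have hj := congrFun hMq j
  simp only [Matrix.mulVec, dotProduct, Matrix.transpose_apply, M, Matrix.of_apply,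
    Pi.smul_apply, smul_eq_mul, Function.comp_apply] at hj
  simp only [Finset.sum_apply, Pi.smul_apply, smul_eq_mul]
  calc ∑ i, (hu.unit⁻¹ • q) i * θ i (e j) = ↑hu.unit⁻¹ * ∑ i, θ i (e j) * q i := by
        rw [Finset.mul_sum]
        exact Finset.sum_congr rfl fun i _ => by rw [Pi.smul_apply, Units.smul_def]; ring
    _ = v (e j) := by rw [hj, ← mul_assoc, hu.val_inv_mul, one_mul]

end Matrix

lemma MultiArr.Q_dvd_det (A : MultiArr K ℓ ι) (η : Fin ℓ → Sub ℓ 1 → S K ℓ)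
    (hη : ∀ i, η i ∈ Dmod A 1) :
    A.Q ∣ (Matrix.of fun i j => η i (singletonEquiv ℓ j)).det := by
  refine Fintype.prod_dvd_of_isRelPrime A.pairwise_isRelPrime fun H => ?_
  obtain ⟨j, hj⟩ := Function.ne_iff.mp (A.nonzero H)
  exact dvd_det_of_dvd_mulVec _ (fun k => C (A.α H k)) (j := j)
    ((isUnit_iff_ne_zero.mpr hj).map C) fun i => pow_dvd_of_mem_Dmod_one A (hη i) H

theorem stmt_3_general {K : Type*} [Field K] {ℓ : ℕ} {ι : Type*} [Fintype ι]
    (A : MultiArr K ℓ ι) (θ : Fin ℓ → (Sub ℓ 1 → S K ℓ))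
    (hmem : ∀ i, θ i ∈ Dmod A 1)
    (c : K) (hc : c ≠ 0)
    (hdet : Matrix.det (Matrix.of fun i j : Fin ℓ =>
        θ i ⟨{j}, Finset.card_singleton j⟩) = C c * A.Q) :
    LinearIndependent (S K ℓ) θ ∧
      Submodule.span (S K ℓ) (Set.range θ) = Dmod A 1 := by
  have hunit : IsUnit (C c : S K ℓ) := (isUnit_iff_ne_zero.mpr hc).map C
  have hdet' : (Matrix.of fun i j => θ i (singletonEquiv ℓ j)).det = C c * A.Q := hdet
  refine ⟨linearIndependent_of_det_ne_zero (singletonEquiv ℓ) ?_,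
    span_eq_of_dvd_det (singletonEquiv ℓ) A.Q_ne_zero A.Q_dvd_det hmem hunit hdet'⟩
  rw [hdet']
  exact mul_ne_zero hunit.ne_zero A.Q_ne_zero

/-- Saito's criterion: homogeneous `θ_1,…,θ_ℓ ∈ D(A,m)` whose
coefficient matrix `(θ_i(x_j))` has determinant `c·Q(A,m)`, `c ≠ 0`, form an
`S`-basis of `D(A,m)`. -/
theorem stmt_3 {K : Type*} [Field K] {ℓ : ℕ} {ι : Type*} [Fintype ι]
    (A : MultiArr K ℓ ι) (θ : Fin ℓ → (Sub ℓ 1 → S K ℓ))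
    (hmem : ∀ i, θ i ∈ Dmod A 1)
    (hhom : ∀ i, ∃ d : ℕ, HomogOfDeg (fun _ => 0) (θ i) (d : ℤ))
    (c : K) (hc : c ≠ 0)
    (hdet : Matrix.det (Matrix.of fun i j : Fin ℓ =>
        θ i ⟨{j}, Finset.card_singleton j⟩) = C c * A.Q) :
    LinearIndependent (S K ℓ) θ ∧
      Submodule.span (S K ℓ) (Set.range θ) = Dmod A 1 :=
  stmt_3_general A θ hmem c hc hdet

end STpaper
end
end

section
/- Graded duality shift: For any multiarrangement (A,m) in K^ℓ, there is a graded S-module isomorphism D^p(A,m) ≅ Q(A,m) · Ω^{ℓ-p}(A,m) for all 0 ≤ p ≤ ℓ; in particular reg D^p(A,m) = |m| + reg Ω^{ℓ-p}(A,m). -/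
open MvPolynomial Finset

noncomputable section

namespace STpaper

variable {K : Type*} [Field K] {ℓ : ℕ}

variable {ι : Type*} [Fintype ι]

/-! The map `ω ↦ θ = (s ↦ ± ω_{sᶜ})` identifies `(ℓ-p)`-forms with `p`-derivations.
Expanding `θ(α, f₂, …, f_p)` along its first column writes it as
`∑_t ± det(∂_{t} f_{≥2}) · (ω ∧ dα)_{tᶜ}`, so `θ` is logarithmic whenever `ω` is; taking
`f_{k+1} = x_{t_k}` isolates a single coefficient of `ω ∧ dα`, which gives the converse. The
isomorphism preserves degrees, so it transports graded free resolutions, and the shift by `|m|`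
is the one between `Ω^{ℓ-p}(A,m)` and `Q(A,m)·Ω^{ℓ-p}(A,m)`. -/

lemma card_filter_lt_orderEmbOfFin {α : Type*} [LinearOrder α] (s : Finset α) {k : ℕ}
    (h : s.card = k) (j : Fin k) : #{x ∈ s | x < s.orderEmbOfFin h j} = j := by
  have hfilter :
      {x ∈ s | x < s.orderEmbOfFin h j} = (Iio j).map (s.orderEmbOfFin h).toEmbedding := by
    ext x
    simp only [mem_filter, mem_map, mem_Iio, RelEmbedding.coe_toEmbedding]
    constructor
    · rintro ⟨hx, hlt⟩
      obtain ⟨i, rfl⟩ : x ∈ Set.range (s.orderEmbOfFin h) := by rwa [range_orderEmbOfFin]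
      exact ⟨i, (s.orderEmbOfFin h).lt_iff_lt.1 hlt, rfl⟩
    · rintro ⟨i, hi, rfl⟩
      exact ⟨s.orderEmbOfFin_mem h i, (s.orderEmbOfFin h).lt_iff_lt.2 hi⟩
  rw [hfilter, card_map, Fin.card_Iio]

lemma orderEmbOfFin_erase {α : Type*} [LinearOrder α] (s : Finset α) {k : ℕ}
    (h : s.card = k + 1) (j : Fin (k + 1)) (h' : (s.erase (s.orderEmbOfFin h j)).card = k)
    (i : Fin k) :
    (s.erase (s.orderEmbOfFin h j)).orderEmbOfFin h' i = s.orderEmbOfFin h (j.succAbove i) :=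
  congrFun (orderEmbOfFin_unique h'
    (fun i => mem_erase.2 ⟨fun he => Fin.succAbove_ne j i ((s.orderEmbOfFin h).injective he),
      s.orderEmbOfFin_mem h _⟩)
    ((s.orderEmbOfFin h).strictMono.comp (Fin.strictMono_succAbove j))).symm i

lemma sum_powersetCard_succ_sum_mem {α M : Type*} [Fintype α] [DecidableEq α]
    [AddCommMonoid M] (k : ℕ) (F : Finset α → α → M) :
    ∑ x ∈ powersetCard (k + 1) univ, ∑ i ∈ x, F x i =
      ∑ y ∈ powersetCard k univ, ∑ i ∈ yᶜ, F (insert i y) i := by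
  rw [sum_sigma', sum_sigma']
  symm
  refine sum_nbij' (fun z => ⟨insert z.2 z.1, z.2⟩) (fun z => ⟨z.1.erase z.2, z.2⟩)
    ?_ ?_ ?_ ?_ fun _ _ => rfl
  · rintro ⟨y, i⟩
    simp only [mem_sigma, mem_powersetCard_univ, mem_compl]
    rintro ⟨hy, hi⟩
    exact ⟨by rw [card_insert_of_notMem hi, hy], mem_insert_self i y⟩
  · rintro ⟨x, i⟩
    simp only [mem_sigma, mem_powersetCard_univ, mem_compl]
    rintro ⟨hx, hi⟩
    exact ⟨by rw [card_erase_of_mem hi, hx]; rfl, notMem_erase i x⟩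
  · rintro ⟨y, i⟩
    simp only [mem_sigma, mem_powersetCard_univ, mem_compl, Sigma.mk.injEq, heq_eq_eq, and_true]
    exact fun ⟨_, hi⟩ => erase_insert hi
  · rintro ⟨x, i⟩
    simp only [mem_sigma, mem_powersetCard_univ, Sigma.mk.injEq, heq_eq_eq, and_true]
    exact fun ⟨_, hi⟩ => insert_erase hi


section HodgeSign

variable {R : Type*} [CommRing R]

/-- Up to a factor depending only on `#s`, the sign of the shuffle listing `s` before `sᶜ`. -/
def hodgeSign (s : Finset (Fin ℓ)) : R := (-1) ^ ∑ x ∈ s, (x : ℕ)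

lemma hodgeSign_mul_self (s : Finset (Fin ℓ)) : (hodgeSign s : R) * hodgeSign s = 1 := by
  rw [hodgeSign, ← pow_add]
  exact Even.neg_one_pow ⟨_, rfl⟩

lemma isUnit_hodgeSign (s : Finset (Fin ℓ)) : IsUnit (hodgeSign s : R) :=
  IsUnit.of_mul_eq_one _ (hodgeSign_mul_self s)

lemma hodgeSign_insert_mul {s : Finset (Fin ℓ)} {i : Fin ℓ} (hi : i ∉ s) :
    (hodgeSign (insert i s) : R) * (-1) ^ #{j ∈ insert i s | j < i} =
      hodgeSign s * (-1) ^ #{j ∈ sᶜ | j < i} := by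
  have hsplit : #{j ∈ s | j < i} + #{j ∈ sᶜ | j < i} = i := by
    rw [← card_union_of_disjoint (disjoint_filter_filter disjoint_compl_right),
      ← filter_union, union_compl, ← Fin.card_Iio]
    congr 1
    ext; simp
  rw [hodgeSign, hodgeSign, sum_insert hi, filter_insert, if_neg (lt_irrefl i), ← hsplit]
  have hsq : ((-1 : R) ^ #{j ∈ s | j < i}) ^ 2 = 1 := by
    rw [← pow_mul]; exact Even.neg_one_pow ⟨_, by ring⟩
  linear_combination ((-1 : R) ^ ∑ x ∈ s, (x : ℕ)) * (-1) ^ #{j ∈ sᶜ | j < i} * hsq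

end HodgeSign

lemma IsHomogZ.neg_one_pow_mul {f : S K ℓ} {e : ℤ} (n : ℕ) (hf : IsHomogZ f e) :
    IsHomogZ ((-1) ^ n * f) e := by
  have := hf.ksmul ((-1) ^ n)
  rwa [MvPolynomial.smul_eq_C_mul, map_pow, map_neg, map_one] at this

lemma isHomogZ_hodgeSign_mul_iff {f : S K ℓ} {e : ℤ} (s : Finset (Fin ℓ)) :
    IsHomogZ (hodgeSign s * f) e ↔ IsHomogZ f e := by
  refine ⟨fun h => ?_, IsHomogZ.neg_one_pow_mul _⟩
  have h' : IsHomogZ (hodgeSign s * (hodgeSign s * f)) e := h.neg_one_pow_mul _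
  rwa [← mul_assoc, hodgeSign_mul_self, one_mul] at h'

def subCompl {p q : ℕ} (h : p + q = ℓ) : Sub ℓ p ≃ Sub ℓ q where
  toFun s := ⟨s.1ᶜ, by rw [card_compl, s.2, Fintype.card_fin]; omega⟩
  invFun u := ⟨u.1ᶜ, by rw [card_compl, u.2, Fintype.card_fin]; omega⟩
  left_inv s := Subtype.ext (compl_compl _)
  right_inv u := Subtype.ext (compl_compl _)

@[simp]
lemma coe_subCompl {p q : ℕ} (h : p + q = ℓ) (s : Sub ℓ p) : (subCompl h s).1 = s.1ᶜ := rfl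

def hodgeStar {p q : ℕ} (h : p + q = ℓ) : (Sub ℓ q → S K ℓ) ≃ₗ[S K ℓ] (Sub ℓ p → S K ℓ) where
  toFun ω s := hodgeSign s.1 * ω (subCompl h s)
  invFun c u := hodgeSign ((subCompl h).symm u).1 * c ((subCompl h).symm u)
  map_add' ω ω' := by ext s; simp [mul_add]
  map_smul' r ω := by ext s; simp [mul_left_comm]
  left_inv ω := by ext u; simp [← mul_assoc, hodgeSign_mul_self]
  right_inv c := by ext s; simp [← mul_assoc, hodgeSign_mul_self]

lemma hodgeStar_apply {p q : ℕ} (h : p + q = ℓ) (ω : Sub ℓ q → S K ℓ) (s : Sub ℓ p) :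
    hodgeStar h ω s = hodgeSign s.1 * ω (subCompl h s) := rfl

lemma homogOfDeg_hodgeStar_iff {p q : ℕ} (h : p + q = ℓ) (c : ℤ) (ω : Sub ℓ q → S K ℓ) (e : ℤ) :
    HomogOfDeg (fun _ => c) ω e ↔ HomogOfDeg (fun _ => c) (hodgeStar h ω) e := by
  simp only [HomogOfDeg, hodgeStar_apply, isHomogZ_hodgeSign_mul_iff]
  exact (subCompl h).forall_congr_right.symm

lemma sum_sub_eq_sum_powersetCard {M : Type*} [AddCommMonoid M] (k : ℕ)
    (F : Finset (Fin ℓ) → M) : ∑ s : Sub ℓ k, F s.1 = ∑ x ∈ powersetCard k univ, F x :=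
  (sum_subtype _ (fun _ => mem_powersetCard_univ) F).symm

lemma pderiv_lin (i : Fin ℓ) (a : Fin ℓ → K) : pderiv i (lin a) = C (a i) := by
  simp [lin, pderiv_X, Pi.single_apply]

lemma detM_cons_lin {p : ℕ} (s : Sub ℓ (p + 1)) (a : Fin ℓ → K) (g : Fin p → S K ℓ) :
    detM s (Fin.cons (lin a) g) = ∑ i ∈ s.1, (-1) ^ #{j ∈ s.1 | j < i} * C (a i) *
      Function.extend Subtype.val (fun t : Sub ℓ p => detM t g) 0 (s.1.erase i) := by
  rw [detM, Matrix.det_succ_column_zero, ← sum_coe_sort s.1,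
    ← (s.1.orderIsoOfFin s.2).toEquiv.sum_comp]
  refine sum_congr rfl fun j _ => ?_
  have hj : (s.1.orderIsoOfFin s.2 j : Fin ℓ) = s.1.orderEmbOfFin s.2 j := rfl
  have hcard : (s.1.erase (s.1.orderEmbOfFin s.2 j)).card = p := by
    rw [card_erase_of_mem (s.1.orderEmbOfFin_mem s.2 j), s.2]; rfl
  simp only [RelIso.coe_fn_toEquiv, hj, card_filter_lt_orderEmbOfFin, Matrix.of_apply,
    Fin.cons_zero, pderiv_lin]
  rw [show s.1.erase (s.1.orderEmbOfFin s.2 j) = (⟨_, hcard⟩ : Sub ℓ p).1 from rfl,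
    Subtype.val_injective.extend_apply, detM]
  congr 2
  ext k k'
  simp [orderEmbOfFin_erase s.1 s.2 j hcard]

lemma wedgeAt_eq_sum (q : ℕ) (a : Fin ℓ → K) (u : Sub ℓ (q + 1)) (ω : Sub ℓ q → S K ℓ) :
    wedgeAt q a u ω = ∑ i ∈ u.1, (-1) ^ #{j ∈ u.1 | j < i} * C (a i) *
      Function.extend Subtype.val ω 0 (u.1.erase i) := by
  simp only [wedgeAt, LinearMap.coe_mk, AddHom.coe_mk]
  rw [← sum_subset (subset_univ u.1) fun i _ hi => dif_neg hi]
  refine sum_congr rfl fun i hi => ?_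
  rw [dif_pos hi]
  exact congrArg _ (Subtype.val_injective.extend_apply ω 0 _).symm

lemma detM_X_orderEmbOfFin {p : ℕ} (s t : Sub ℓ p) :
    detM t (fun k => X (s.1.orderEmbOfFin s.2 k) : Fin p → S K ℓ) = if t = s then 1 else 0 := by
  simp only [detM, coe_orderIsoOfFin_apply]
  split_ifs with hts
  · subst hts
    convert (Matrix.det_one : (1 : Matrix (Fin p) (Fin p) (S K ℓ)).det = 1)
    ext j k
    simp [pderiv_X, Pi.single_apply, Matrix.one_apply, (t.1.orderEmbOfFin t.2).injective.eq_iff,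
      eq_comm]
  · obtain ⟨x, hxs, hxt⟩ : ∃ x ∈ s.1, x ∉ t.1 := by
      by_contra! hst
      exact hts (Subtype.ext (eq_of_subset_of_card_le hst (by rw [s.2, t.2])).symm)
    obtain ⟨k, rfl⟩ : x ∈ Set.range (s.1.orderEmbOfFin s.2) := by rwa [range_orderEmbOfFin]
    refine Matrix.det_eq_zero_of_column_eq_zero k fun j => pderiv_X_of_ne ?_
    exact fun he => hxt (he ▸ t.1.orderEmbOfFin_mem t.2 j)

lemma evalD_cons_hodgeStar {p q : ℕ} (h : p + 1 + q = ℓ) (a : Fin ℓ → K) (g : Fin p → S K ℓ)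
    (ω : Sub ℓ q → S K ℓ) :
    evalD (p + 1) (Fin.cons (lin a) g) (hodgeStar h ω) =
      ∑ t : Sub ℓ p, hodgeSign t.1 * detM t g * wedgeAt q a (subCompl (by omega) t) ω := by
  set W := Function.extend Subtype.val ω (0 : Finset (Fin ℓ) → S K ℓ)
  set D := Function.extend Subtype.val (fun t : Sub ℓ p => detM t g)
    (0 : Finset (Fin ℓ) → S K ℓ) with hD_def
  have hW : ∀ s : Sub ℓ (p + 1), ω (subCompl h s) = W s.1ᶜ := fun s =>
    (Subtype.val_injective.extend_apply ω 0 (subCompl h s)).symm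
  have hD : ∀ t : Sub ℓ p, detM t g = D t.1 := fun t =>
    (Subtype.val_injective.extend_apply (fun t : Sub ℓ p => detM t g) 0 t).symm
  calc evalD (p + 1) (Fin.cons (lin a) g) (hodgeStar h ω)
      = ∑ x ∈ powersetCard (p + 1) univ, ∑ i ∈ x,
          (hodgeSign x : S K ℓ) * W xᶜ * ((-1) ^ #{j ∈ x | j < i} * C (a i) * D (x.erase i)) := by
        simp only [evalD, LinearMap.coe_mk, AddHom.coe_mk, hodgeStar_apply, hW, detM_cons_lin,
          ← hD_def, mul_sum]
        rw [← sum_sub_eq_sum_powersetCard]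
    _ = ∑ y ∈ powersetCard p univ, ∑ i ∈ yᶜ, (hodgeSign (insert i y) : S K ℓ) * W (insert i y)ᶜ *
          ((-1) ^ #{j ∈ insert i y | j < i} * C (a i) * D ((insert i y).erase i)) :=
        sum_powersetCard_succ_sum_mem p _
    _ = ∑ y ∈ powersetCard p univ, ∑ i ∈ yᶜ,
          (hodgeSign y : S K ℓ) * D y * ((-1) ^ #{j ∈ yᶜ | j < i} * C (a i) * W (yᶜ.erase i)) := by
        refine sum_congr rfl fun y _ => sum_congr rfl fun i hi => ?_
        have hiy : i ∉ y := mem_compl.1 hi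
        rw [compl_insert, erase_insert hiy]
        linear_combination W (yᶜ.erase i) * C (a i) * D y * hodgeSign_insert_mul (R := S K ℓ) hiy
    _ = ∑ t : Sub ℓ p, hodgeSign t.1 * detM t g * wedgeAt q a (subCompl (by omega) t) ω := by
        simp only [hD, wedgeAt_eq_sum, coe_subCompl, mul_sum]
        rw [← sum_sub_eq_sum_powersetCard]

section Membership

variable (A : MultiArr K ℓ ι)

lemma Dmod_zero : Dmod A 0 = ⊤ :=
  eq_top_iff.2 fun _ _ _ _ j => j.elim0

lemma OmegaQ_eq_top {q : ℕ} (hq : ℓ ≤ q) : OmegaQ A q = ⊤ := by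
  refine eq_top_iff.2 fun _ _ _ u => absurd (card_le_univ u.1) ?_
  rw [u.2, Fintype.card_fin]
  omega

lemma hodgeStar_mem_Dmod_iff {p q : ℕ} (h : p + q = ℓ) (ω : Sub ℓ q → S K ℓ) :
    hodgeStar h ω ∈ Dmod A p ↔ ω ∈ OmegaQ A q := by
  cases p with
  | zero => simp [Dmod_zero, OmegaQ_eq_top A (le_of_eq (by omega : ℓ = q))]
  | succ p =>
    constructor
    · intro hθ H u
      set t := (subCompl (by omega : p + (q + 1) = ℓ)).symm u
      have hdvd := hθ H (Fin.cons (lin (A.α H)) fun k => X (t.1.orderEmbOfFin t.2 k)) 0 rfl rfl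
      rwa [evalD_cons_hodgeStar, Fintype.sum_eq_single t fun t' ht' => by
          simp [detM_X_orderEmbOfFin, ht'], detM_X_orderEmbOfFin, if_pos rfl, mul_one,
        Equiv.apply_symm_apply, (isUnit_hodgeSign _).dvd_mul_left] at hdvd
    · intro hω H f j hj hf
      obtain rfl : j = 0 := Fin.ext hj
      rw [← Fin.cons_self_tail f, hf, evalD_cons_hodgeStar]
      exact dvd_sum fun t _ => (hω H _).mul_left _

lemma map_hodgeStar_OmegaQ {p q : ℕ} (h : p + q = ℓ) :
    (OmegaQ A q).map (hodgeStar (K := K) h : (Sub ℓ q → S K ℓ) →ₗ[S K ℓ] (Sub ℓ p → S K ℓ)) =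
      Dmod A p := by
  ext c
  rw [Submodule.mem_map_equiv, ← hodgeStar_mem_Dmod_iff A h, LinearEquiv.apply_symm_apply]

end Membership

lemma combMap_comp {κ κ' : Type*} {n : ℕ} (φ : (κ → S K ℓ) →ₗ[S K ℓ] (κ' → S K ℓ))
    (g : Fin n → κ → S K ℓ) : combMap (fun j => φ (g j)) = φ ∘ₗ combMap g :=
  LinearMap.ext fun v => by simp [combMap]

section Regularity

variable {κ κ' : Type*} [Fintype κ] [Fintype κ'] {M : Submodule (S K ℓ) (κ → S K ℓ)}
  {sh : κ → ℤ} {r : ℤ}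

lemma RegLE.map {sh' : κ' → ℤ} (hM : RegLE M sh r) (φ : (κ → S K ℓ) →ₗ[S K ℓ] (κ' → S K ℓ))
    (hφ : Function.Injective φ) (hdeg : ∀ v e, HomogOfDeg sh v e → HomogOfDeg sh' (φ v) e) :
    RegLE (M.map φ) sh' r := by
  obtain ⟨R, hR⟩ := hM
  refine ⟨{ R with
    gen := fun j => φ (R.gen j)
    gen_mem := fun j => Submodule.mem_map_of_mem (R.gen_mem j)
    gen_hom := fun j => hdeg _ _ (R.gen_hom j)
    range_gen := ?_
    exact0 := ?_ }, hR⟩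
  · rw [combMap_comp, LinearMap.range_comp, R.range_gen]
  · rw [combMap_comp, LinearMap.ker_comp_of_ker_eq_bot _ (LinearMap.ker_eq_bot.2 hφ), R.exact0]

lemma regLE_map_equiv_iff {sh' : κ' → ℤ} (φ : (κ → S K ℓ) ≃ₗ[S K ℓ] (κ' → S K ℓ))
    (hdeg : ∀ v e, HomogOfDeg sh v e ↔ HomogOfDeg sh' (φ v) e) :
    RegLE (M.map (φ : (κ → S K ℓ) →ₗ[S K ℓ] (κ' → S K ℓ))) sh' r ↔ RegLE M sh r := by
  refine ⟨fun hM => ?_, fun hM => hM.map _ φ.injective fun v e => (hdeg v e).1⟩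
  have := hM.map _ φ.symm.injective fun w e hw => (hdeg _ e).2 (by simpa using hw)
  rwa [(Submodule.map_symm_eq_iff φ).2 rfl] at this

lemma RegLE.shift {sh' : κ → ℤ} (d : ℤ) (hsh : ∀ k, sh' k = sh k + d) (hM : RegLE M sh r) :
    RegLE M sh' (r + d) := by
  obtain ⟨R, hR⟩ := hM
  refine ⟨{ R with
    dg := fun i j => R.dg i j + d
    gen_hom := fun j k => ?_
    mat_hom := fun i a b => ?_ }, fun i j => ?_⟩
  · simpa [hsh] using R.gen_hom j k
  · simpa using R.mat_hom i a b
  · show R.dg i j + d ≤ r + d + i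
    linarith [hR i j]

lemma regLE_shift_iff {sh' : κ → ℤ} (d : ℤ) (hsh : ∀ k, sh' k = sh k + d) :
    RegLE M sh' (r + d) ↔ RegLE M sh r :=
  ⟨fun hM => by simpa using hM.shift (-d) fun k => by rw [hsh]; ring, RegLE.shift d hsh⟩

end Regularity

/-- there is a degree-preserving `S`-linear isomorphism of the
ambient modules carrying `Q(A,m)·Ω^{ℓ-p}(A,m)` onto `D^p(A,m)`; in particular
`reg D^p(A,m) = |m| + reg Ω^{ℓ-p}(A,m)`. -/
theorem stmt_11 {K : Type*} [Field K] {ℓ : ℕ} {ι : Type*} [Fintype ι]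
    (A : MultiArr K ℓ ι) (p : ℕ) (hp : p ≤ ℓ) :
    (∃ φ : ((Sub ℓ (ℓ - p)) → S K ℓ) ≃ₗ[S K ℓ] ((Sub ℓ p) → S K ℓ),
      (∀ (v : (Sub ℓ (ℓ - p)) → S K ℓ) (e : ℤ),
        HomogOfDeg (fun _ => 0) v e ↔ HomogOfDeg (fun _ => 0) (φ v) e) ∧
      Submodule.map (φ : ((Sub ℓ (ℓ - p)) → S K ℓ) →ₗ[S K ℓ] _)
        (OmegaQ A (ℓ - p)) = Dmod A p)
    ∧ ∀ r : ℤ, RegLE (Dmod A p) (fun _ => 0) r ↔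
        RegLE (OmegaQ A (ℓ - p)) (fun _ => -(A.size : ℤ)) (r - A.size) := by
  have h : p + (ℓ - p) = ℓ := Nat.add_sub_of_le hp
  refine ⟨⟨hodgeStar h, homogOfDeg_hodgeStar_iff h 0, map_hodgeStar_OmegaQ A h⟩, fun r => ?_⟩
  rw [← map_hodgeStar_OmegaQ A h, regLE_map_equiv_iff _ (homogOfDeg_hodgeStar_iff h 0),
    sub_eq_add_neg, regLE_shift_iff _ fun _ => (zero_add _).symm]

end STpaper
end
end
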